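/- In any Coxeter group, the Möbius function of the Bruhat order satisfies μ(u,v) = (-1)^(ℓ(v)-ℓ(u)) for all u ≤ v. -/

import Mathlib

/-!
By triangularity of the defining recursion it suffices to show that `(-1)^ℓ(w)` sums to zero over
every interval `[u, v]` with `u < v` (Verma). Pick a left descent `s` of `v`. If `su > u`, then
`w ↦ sw` is a sign-reversing involution of `[u, v]`. If `su < u`, then `[su, v]` is `s`-stable and
`[su, v] = [u, v] ⊔ ([su, sv] \ [u, sv])`, so induction on `ℓ(v)` applies.

Both cases rest on the lifting property: `x ≤ z` implies `min(x, sx) ≤ min(z, sz)` and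
`max(x, sx) ≤ max(z, sz)`. For a single Bruhat edge `z = xt` this follows from the exchange
property, which comes from the sign representation `(t, ε) ↦ (sᵢ t sᵢ, ±ε)` of `W` on
`W × ℤˣ`: a reflection `t` with `ℓ(wt) < ℓ(w)` occurs in the right inversion sequence of every
word for `w`.
-/

open Polynomial

variable {B W : Type*} [Group W] {M : CoxeterMatrix B}

/-- An edge of the Bruhat graph: `v = u * t` for a reflection `t`, with `ℓ(u) < ℓ(v)`. -/
def BruhatEdge (cs : CoxeterSystem M W) (u v : W) : Prop :=
  ∃ t : W, cs.IsReflection t ∧ v = u * t ∧ cs.length u < cs.length v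

/-- The Bruhat order on a Coxeter group. -/
def BruhatLE (cs : CoxeterSystem M W) : W → W → Prop :=
  Relation.ReflTransGen (BruhatEdge cs)

theorem neg_one_pow_sub_of_le {R : Type*} [Monoid R] [HasDistribNeg R] {a b : ℕ} (h : a ≤ b) :
    (-1 : R) ^ (b - a) = (-1) ^ a * (-1) ^ b := by
  obtain ⟨c, rfl⟩ := Nat.exists_eq_add_of_le h
  rw [Nat.add_sub_cancel_left, pow_add, ← mul_assoc, ← pow_add, ← two_mul, pow_mul, neg_one_sq,
    one_pow, one_mul]

theorem mul_mul_inv_eq_iff {G : Type*} [Group G] (g t r : G) :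
    g * t * g⁻¹ = r ↔ t = g⁻¹ * r * g := by
  constructor <;> rintro rfl <;> group

namespace CoxeterSystem

variable (cs : CoxeterSystem M W)

local prefix:100 "s" => cs.simple
local prefix:100 "π" => cs.wordProd
local prefix:100 "ℓ" => cs.length

section SignRepresentation

open scoped Classical

noncomputable def simpleSignPerm (i : B) : Equiv.Perm (W × ℤˣ) :=
  Function.Involutive.toPerm (fun p => (s i * p.1 * s i, if p.1 = s i then -p.2 else p.2)) <| by
    rintro ⟨t, ε⟩
    have hconj : s i * t * s i = s i ↔ t = s i := by
      simpa [cs.inv_simple] using mul_mul_inv_eq_iff (s i) t (s i)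
    by_cases ht : t = s i <;> simp [ht, hconj, ← mul_assoc]

theorem simpleSignPerm_apply (i : B) (t : W) (ε : ℤˣ) :
    cs.simpleSignPerm i (t, ε) = (s i * t * s i, if t = s i then -ε else ε) := rfl

theorem simpleSignPerm_mul_pow_apply (i j : B) (k : ℕ) (t : W) (ε : ℤˣ) :
    ((cs.simpleSignPerm i * cs.simpleSignPerm j) ^ k) (t, ε) =
      (((s j * s i) ^ k)⁻¹ * t * (s j * s i) ^ k,
        ε * ∏ n ∈ Finset.range (2 * k), if t = (s j * s i) ^ n * s j then -1 else 1) := by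
  set a := s j * s i with ha
  have hstep : ∀ t, s i * (s j * t * s j) * s i = a⁻¹ * t * a := by
    simp [ha, cs.inv_simple, mul_assoc]
  have hshift : ∀ n : ℕ, a * (a ^ n * s j) * a⁻¹ = a ^ (n + 2) * s j := by
    intro n
    rw [← mul_assoc, ← pow_succ', pow_succ _ (n + 1)]
    simp [ha, cs.inv_simple, mul_assoc]
  have hflip : ∀ t n, a⁻¹ * t * a = a ^ n * s j ↔ t = a ^ (n + 2) * s j := by
    intro t n
    rw [← hshift]
    constructor <;> intro h
    · rw [← h]; group
    · rw [h]; group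
  induction k generalizing t ε with
  | zero => simp
  | succ k ih =>
    rw [pow_succ, Equiv.Perm.mul_apply, Equiv.Perm.mul_apply, cs.simpleSignPerm_apply,
      cs.simpleSignPerm_apply, ih, hstep]
    have hj : s j * t * s j = s i ↔ t = a ^ 1 * s j := by
      simpa [cs.inv_simple, ha, mul_assoc] using mul_mul_inv_eq_iff (s j) t (s i)
    refine Prod.ext (by simp [pow_succ', mul_assoc]) ?_
    rw [show 2 * (k + 1) = 2 * k + 1 + 1 by ring, Finset.prod_range_succ', Finset.prod_range_succ']
    simp only [hflip, hj, pow_zero, one_mul]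
    split_ifs <;> simp [mul_comm]

theorem simpleSignPerm_isLiftable : M.IsLiftable cs.simpleSignPerm := by
  intro i j
  ext ⟨t, ε⟩ : 1
  -- `n ↦ (sⱼ sᵢ)ⁿ sⱼ` has period `M i j`, so every factor of the product occurs twice.
  rw [cs.simpleSignPerm_mul_pow_apply, cs.simple_mul_simple_pow', two_mul, Finset.prod_range_add]
  simp [pow_add, Int.units_mul_self]

noncomputable def signRep : W →* Equiv.Perm (W × ℤˣ) :=
  cs.lift ⟨cs.simpleSignPerm, cs.simpleSignPerm_isLiftable⟩

theorem signRep_wordProd_apply (ω : List B) (t : W) (ε : ℤˣ) :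
    cs.signRep (π ω) (t, ε) =
      (π ω * t * (π ω)⁻¹, ε * ((cs.rightInvSeq ω).map fun r => if t = r then -1 else 1).prod) := by
  induction ω generalizing t ε with
  | nil => simp
  | cons i ω ih =>
    rw [cs.wordProd_cons, map_mul, Equiv.Perm.mul_apply, ih, signRep,
      cs.lift_apply_simple cs.simpleSignPerm_isLiftable, cs.simpleSignPerm_apply]
    refine Prod.ext (by simp [mul_assoc, cs.inv_simple]) ?_
    simp only [rightInvSeq, List.map_cons, List.prod_cons, mul_mul_inv_eq_iff]
    split_ifs <;> simp

noncomputable def inversionSign (w t : W) : ℤˣ := (cs.signRep w (t, 1)).2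

theorem signRep_apply (w t : W) (ε : ℤˣ) :
    cs.signRep w (t, ε) = (w * t * w⁻¹, ε * cs.inversionSign w t) := by
  obtain ⟨ω, rfl⟩ := cs.wordProd_surjective w
  simp [inversionSign, signRep_wordProd_apply]

theorem inversionSign_wordProd (ω : List B) (t : W) :
    cs.inversionSign (π ω) t = ((cs.rightInvSeq ω).map fun r => if t = r then -1 else 1).prod := by
  simp [inversionSign, signRep_wordProd_apply]

theorem inversionSign_mul (g h t : W) :
    cs.inversionSign (g * h) t = cs.inversionSign h t * cs.inversionSign g (h * t * h⁻¹) := by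
  show (cs.signRep (g * h) (t, 1)).2 = _
  rw [map_mul, Equiv.Perm.mul_apply, cs.signRep_apply h, cs.signRep_apply g, one_mul]

theorem inversionSign_one (t : W) : cs.inversionSign 1 t = 1 := by
  simp [inversionSign]

theorem inversionSign_simple_self (i : B) : cs.inversionSign (s i) (s i) = -1 := by
  simp [inversionSign, signRep, cs.lift_apply_simple cs.simpleSignPerm_isLiftable,
    cs.simpleSignPerm_apply]

variable {cs}

theorem IsReflection.inversionSign_self {t : W} (ht : cs.IsReflection t) :
    cs.inversionSign t t = -1 := by
  obtain ⟨x, i, rfl⟩ := ht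
  -- Expand both `x * x⁻¹ = 1` and `x * (sᵢ * x⁻¹) = t` by the cocycle rule `inversionSign_mul`.
  have h_one : cs.inversionSign x⁻¹ (x * s i * x⁻¹) * cs.inversionSign x (s i) = 1 := by
    have := cs.inversionSign_mul x x⁻¹ (x * s i * x⁻¹)
    rwa [mul_inv_cancel, inversionSign_one, show x⁻¹ * (x * s i * x⁻¹) * x⁻¹⁻¹ = s i by group,
      eq_comm] at this
  have h_simple : cs.inversionSign (s i * x⁻¹) (x * s i * x⁻¹) =
      -cs.inversionSign x⁻¹ (x * s i * x⁻¹) := by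
    rw [inversionSign_mul, show x⁻¹ * (x * s i * x⁻¹) * x⁻¹⁻¹ = s i by group,
      inversionSign_simple_self, mul_neg_one]
  nth_rewrite 1 [mul_assoc x (s i) x⁻¹]
  rw [inversionSign_mul, h_simple,
    show s i * x⁻¹ * (x * s i * x⁻¹) * (s i * x⁻¹)⁻¹ = s i by simp [mul_assoc, cs.inv_simple],
    neg_mul, h_one]

theorem IsReflection.inversionSign_mul_self {t : W} (ht : cs.IsReflection t) (w : W) :
    cs.inversionSign (w * t) t = -cs.inversionSign w t := by
  rw [inversionSign_mul, ht.inversionSign_self, ht.mul_self, one_mul, ht.inv, neg_one_mul]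

variable (cs) in
theorem mem_rightInvSeq_of_inversionSign_eq_neg_one {w t : W} (h : cs.inversionSign w t = -1)
    {ω : List B} (hω : π ω = w) : t ∈ cs.rightInvSeq ω := by
  by_contra hmem
  subst hω
  rw [inversionSign_wordProd, List.prod_eq_one] at h
  · exact absurd h (by decide)
  · simp only [List.mem_map]
    rintro _ ⟨r, hr, rfl⟩
    exact if_neg fun htr : t = r => hmem (htr ▸ hr)

theorem IsRightInversion.inversionSign_eq_neg_one {w t : W} (h : cs.IsRightInversion w t) :
    cs.inversionSign w t = -1 := by
  refine (Int.units_eq_one_or _).resolve_left fun hsign => ?_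
  obtain ⟨ω, hω, hwt⟩ := cs.exists_isReduced (w * t)
  have hmem : t ∈ cs.rightInvSeq ω := by
    refine cs.mem_rightInvSeq_of_inversionSign_eq_neg_one ?_ hwt.symm
    rw [h.1.inversionSign_mul_self, hsign]
  have := (cs.isRightInversion_of_mem_rightInvSeq hω hmem).2
  rw [← hwt, mul_assoc, h.1.mul_self, mul_one] at this
  exact absurd h.2 this.not_gt

theorem IsRightInversion.mem_rightInvSeq {w t : W} (h : cs.IsRightInversion w t) {ω : List B}
    (hω : π ω = w) : t ∈ cs.rightInvSeq ω :=
  cs.mem_rightInvSeq_of_inversionSign_eq_neg_one h.inversionSign_eq_neg_one hω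

end SignRepresentation

section BruhatOrder

theorem length_le_of_bruhatLE {u v : W} (h : BruhatLE cs u v) : ℓ u ≤ ℓ v := by
  induction h with
  | refl => rfl
  | tail _ hedge ih =>
    obtain ⟨_, _, _, hlt⟩ := hedge
    exact ih.trans hlt.le

theorem length_lt_of_bruhatLE_of_ne {u v : W} (h : BruhatLE cs u v) (hne : u ≠ v) : ℓ u < ℓ v := by
  obtain rfl | ⟨w, huw, t, -, -, hlt⟩ := Relation.ReflTransGen.cases_tail h
  · exact absurd rfl hne
  · exact (cs.length_le_of_bruhatLE huw).trans_lt hlt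

theorem bruhatLE_simple_mul {w : W} {i : B} (h : ℓ w < ℓ (s i * w)) : BruhatLE cs w (s i * w) := by
  refine .single ⟨w⁻¹ * s i * w, ?_, by group, h⟩
  simpa using (cs.isReflection_simple i).conj w⁻¹

theorem simple_mul_bruhatLE {w : W} {i : B} (h : ℓ (s i * w) < ℓ w) : BruhatLE cs (s i * w) w := by
  simpa using cs.bruhatLE_simple_mul (w := s i * w) (i := i) (by simpa using h)

/-- `t` is a right inversion of `z`, so it occurs in the right inversion sequence of the word
`sᵢ · (reduced word of sᵢz)` for `z`: as its first entry exactly when `x = sᵢz`, and otherwise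
as a right inversion of `sᵢz`. -/
theorem simple_mul_eq_or_bruhatEdge {x z t : W} (i : B) (ht : cs.IsReflection t) (hz : z = x * t)
    (hlt : ℓ x < ℓ z) : s i * x = z ∨ BruhatEdge cs (s i * x) (s i * z) := by
  have hx : x = z * t := by rw [hz, mul_assoc, ht.mul_self, mul_one]
  obtain ⟨τ, hτ, hτz⟩ := cs.exists_isReduced (s i * z)
  have hmem := IsRightInversion.mem_rightInvSeq ⟨ht, hx ▸ hlt⟩ (ω := i :: τ) <| by
    rw [cs.wordProd_cons, ← hτz, cs.simple_mul_simple_cancel_left]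
  rcases List.mem_cons.mp hmem with ht_eq | hmem
  · left
    rw [hx, ht_eq, ← hτz]
    simp [mul_assoc, cs.inv_simple]
  · right
    have hlt' := (cs.isRightInversion_of_mem_rightInvSeq hτ hmem).2
    rw [← hτz, mul_assoc, ← hx] at hlt'
    exact ⟨t, ht, by rw [hz, mul_assoc], hlt'⟩

noncomputable def minSimpleMul (i : B) (w : W) : W := if ℓ (s i * w) < ℓ w then s i * w else w

noncomputable def maxSimpleMul (i : B) (w : W) : W := if ℓ (s i * w) < ℓ w then w else s i * w

variable {cs}

theorem minSimpleMul_of_length_lt {i : B} {w : W} (h : ℓ (s i * w) < ℓ w) :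
    cs.minSimpleMul i w = s i * w := if_pos h

theorem minSimpleMul_of_length_gt {i : B} {w : W} (h : ℓ w < ℓ (s i * w)) :
    cs.minSimpleMul i w = w := if_neg h.not_gt

theorem maxSimpleMul_of_length_lt {i : B} {w : W} (h : ℓ (s i * w) < ℓ w) :
    cs.maxSimpleMul i w = w := if_pos h

theorem maxSimpleMul_of_length_gt {i : B} {w : W} (h : ℓ w < ℓ (s i * w)) :
    cs.maxSimpleMul i w = s i * w := if_neg h.not_gt

variable (cs)

theorem minSimpleMul_bruhatLE_simple_mul (i : B) (w : W) :
    BruhatLE cs (cs.minSimpleMul i w) (s i * w) := by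
  rcases lt_or_gt_of_ne (cs.length_simple_mul_ne w i) with h | h
  · rw [minSimpleMul_of_length_lt h]
    exact .refl
  · rw [minSimpleMul_of_length_gt h]
    exact cs.bruhatLE_simple_mul h

theorem simple_mul_bruhatLE_maxSimpleMul (i : B) (w : W) :
    BruhatLE cs (s i * w) (cs.maxSimpleMul i w) := by
  rcases lt_or_gt_of_ne (cs.length_simple_mul_ne w i) with h | h
  · rw [maxSimpleMul_of_length_lt h]
    exact cs.simple_mul_bruhatLE h
  · rw [maxSimpleMul_of_length_gt h]
    exact .refl

theorem minSimpleMul_and_maxSimpleMul_of_bruhatEdge {x z : W} (i : B) (h : BruhatEdge cs x z) :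
    BruhatLE cs (cs.minSimpleMul i x) (cs.minSimpleMul i z) ∧
      BruhatLE cs (cs.maxSimpleMul i x) (cs.maxSimpleMul i z) := by
  obtain ⟨t, ht, hz, hlt⟩ := h
  have hxz : BruhatLE cs x z := .single ⟨t, ht, hz, hlt⟩
  have hsxz : s i * x = z ∨ BruhatLE cs (s i * x) (s i * z) :=
    (cs.simple_mul_eq_or_bruhatEdge i ht hz hlt).imp_right .single
  have hszx (heq : s i * x = z) : s i * z = x := by rw [← heq, cs.simple_mul_simple_cancel_left]
  rcases lt_or_gt_of_ne (cs.length_simple_mul_ne x i) with hx | hx <;>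
    rcases lt_or_gt_of_ne (cs.length_simple_mul_ne z i) with hz | hz
  · rw [minSimpleMul_of_length_lt hx, minSimpleMul_of_length_lt hz, maxSimpleMul_of_length_lt hx,
      maxSimpleMul_of_length_lt hz]
    refine ⟨hsxz.resolve_left ?_, hxz⟩
    rintro rfl
    omega
  · rw [minSimpleMul_of_length_lt hx, minSimpleMul_of_length_gt hz, maxSimpleMul_of_length_lt hx,
      maxSimpleMul_of_length_gt hz]
    exact ⟨(cs.simple_mul_bruhatLE hx).trans hxz, hxz.trans (cs.bruhatLE_simple_mul hz)⟩
  · rw [minSimpleMul_of_length_gt hx, minSimpleMul_of_length_lt hz, maxSimpleMul_of_length_gt hx,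
      maxSimpleMul_of_length_lt hz]
    rcases hsxz with heq | hle
    · rw [hszx heq, heq]
      exact ⟨.refl, .refl⟩
    · exact ⟨(cs.bruhatLE_simple_mul hx).trans hle, hle.trans (cs.simple_mul_bruhatLE hz)⟩
  · rw [minSimpleMul_of_length_gt hx, minSimpleMul_of_length_gt hz, maxSimpleMul_of_length_gt hx,
      maxSimpleMul_of_length_gt hz]
    refine ⟨hxz, hsxz.resolve_left fun heq => ?_⟩
    rw [hszx heq] at hz
    omega

theorem minSimpleMul_bruhatLE_minSimpleMul {x z : W} (i : B) (h : BruhatLE cs x z) :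
    BruhatLE cs (cs.minSimpleMul i x) (cs.minSimpleMul i z) :=
  Relation.ReflTransGen.lift' (r := BruhatEdge cs) (cs.minSimpleMul i)
    (fun _ _ he => (cs.minSimpleMul_and_maxSimpleMul_of_bruhatEdge i he).1) _ _ h

theorem maxSimpleMul_bruhatLE_maxSimpleMul {x z : W} (i : B) (h : BruhatLE cs x z) :
    BruhatLE cs (cs.maxSimpleMul i x) (cs.maxSimpleMul i z) :=
  Relation.ReflTransGen.lift' (r := BruhatEdge cs) (cs.maxSimpleMul i)
    (fun _ _ he => (cs.minSimpleMul_and_maxSimpleMul_of_bruhatEdge i he).2) _ _ h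

theorem bruhatLE_simple_mul_of_bruhatLE {u v w : W} {i : B} (hu : ℓ u < ℓ (s i * u))
    (hv : ℓ (s i * v) < ℓ v) (huw : BruhatLE cs u w) (hwv : BruhatLE cs w v) :
    BruhatLE cs u (s i * w) ∧ BruhatLE cs (s i * w) v := by
  have hmin := (cs.minSimpleMul_bruhatLE_minSimpleMul i huw).trans
    (cs.minSimpleMul_bruhatLE_simple_mul i w)
  have hmax := (cs.simple_mul_bruhatLE_maxSimpleMul i w).trans
    (cs.maxSimpleMul_bruhatLE_maxSimpleMul i hwv)
  rw [minSimpleMul_of_length_gt hu] at hmin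
  rw [maxSimpleMul_of_length_lt hv] at hmax
  exact ⟨hmin, hmax⟩

theorem bruhatLE_simple_mul_of_not_bruhatLE {u v w : W} {i : B} (hu : ℓ (s i * u) < ℓ u)
    (hv : ℓ (s i * v) < ℓ v) (huw : BruhatLE cs (s i * u) w) (hwv : BruhatLE cs w v)
    (hnot : ¬BruhatLE cs u w) : BruhatLE cs w (s i * v) := by
  have hw : ℓ w < ℓ (s i * w) := by
    refine (lt_or_gt_of_ne (cs.length_simple_mul_ne w i)).resolve_left fun hw => hnot ?_
    have hmax := cs.maxSimpleMul_bruhatLE_maxSimpleMul i huw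
    rwa [maxSimpleMul_of_length_gt (by rwa [cs.simple_mul_simple_cancel_left]),
      cs.simple_mul_simple_cancel_left, maxSimpleMul_of_length_lt hw] at hmax
  have hmin := cs.minSimpleMul_bruhatLE_minSimpleMul i hwv
  rwa [minSimpleMul_of_length_gt hw, minSimpleMul_of_length_lt hv] at hmin

end BruhatOrder

section AlternatingSum

variable (hfin : ∀ u v : W, {w | BruhatLE cs u w ∧ BruhatLE cs w v}.Finite)

theorem mem_bruhatIcc {u v w : W} :
    w ∈ (hfin u v).toFinset ↔ BruhatLE cs u w ∧ BruhatLE cs w v :=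
  Set.Finite.mem_toFinset _

theorem neg_one_pow_length_simple_mul {R : Type*} [Monoid R] [HasDistribNeg R] (i : B) (w : W) :
    (-1 : R) ^ ℓ (s i * w) = -(-1) ^ ℓ w := by
  rcases cs.length_simple_mul w i with h | h
  · rw [h, pow_succ, mul_neg_one]
  · rw [← h, pow_succ, mul_neg_one, neg_neg]

theorem sum_neg_one_pow_length_eq_zero_of_simple_mul_mem {S : Finset W} (i : B)
    (hS : ∀ w ∈ S, s i * w ∈ S) : ∑ w ∈ S, (-1 : ℤ) ^ ℓ w = 0 :=
  Finset.sum_involution (fun w _ => s i * w)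
    (fun w _ => by rw [neg_one_pow_length_simple_mul, add_neg_cancel])
    (fun w _ _ h => cs.length_simple_mul_ne w i (by rw [h])) hS
    (fun _ _ => cs.simple_mul_simple_cancel_left i)

theorem sum_bruhatIcc_add_sum_bruhatIcc {A : Type*} [AddCommMonoid A] (f : W → A) {u v : W} {i : B}
    (hu : ℓ (s i * u) < ℓ u) (hv : ℓ (s i * v) < ℓ v) :
    ∑ w ∈ (hfin (s i * u) v).toFinset, f w + ∑ w ∈ (hfin u (s i * v)).toFinset, f w =
      ∑ w ∈ (hfin u v).toFinset, f w + ∑ w ∈ (hfin (s i * u) (s i * v)).toFinset, f w := by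
  classical
  have hsu := cs.simple_mul_bruhatLE hu
  have hsv := cs.simple_mul_bruhatLE hv
  have h₁ : (hfin (s i * u) v).toFinset.filter (BruhatLE cs u) = (hfin u v).toFinset := by
    ext w
    simp only [Finset.mem_filter, mem_bruhatIcc]
    exact ⟨fun h => ⟨h.2, h.1.2⟩, fun h => ⟨⟨hsu.trans h.1, h.2⟩, h.1⟩⟩
  have h₂ : (hfin (s i * u) v).toFinset.filter (¬BruhatLE cs u ·) =
      (hfin (s i * u) (s i * v)).toFinset.filter (¬BruhatLE cs u ·) := by
    ext w
    simp only [Finset.mem_filter, mem_bruhatIcc]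
    exact ⟨fun h => ⟨⟨h.1.1, cs.bruhatLE_simple_mul_of_not_bruhatLE hu hv h.1.1 h.1.2 h.2⟩, h.2⟩,
      fun h => ⟨⟨h.1.1, h.1.2.trans hsv⟩, h.2⟩⟩
  have h₃ : (hfin (s i * u) (s i * v)).toFinset.filter (BruhatLE cs u) =
      (hfin u (s i * v)).toFinset := by
    ext w
    simp only [Finset.mem_filter, mem_bruhatIcc]
    exact ⟨fun h => ⟨h.2, h.1.2⟩, fun h => ⟨⟨hsu.trans h.1, h.2⟩, h.1⟩⟩
  rw [← Finset.sum_filter_add_sum_filter_not _ (BruhatLE cs u),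
    ← Finset.sum_filter_add_sum_filter_not (hfin (s i * u) (s i * v)).toFinset (BruhatLE cs u),
    h₁, h₂, h₃]
  abel

theorem sum_neg_one_pow_length_eq_zero {u v : W} (huv : BruhatLE cs u v) (hne : u ≠ v) :
    ∑ w ∈ (hfin u v).toFinset, (-1 : ℤ) ^ ℓ w = 0 := by
  induction hn : ℓ v using Nat.strong_induction_on generalizing u v with
  | _ n ih =>
  subst hn
  have hv1 : v ≠ 1 := by
    rintro rfl
    simpa using cs.length_lt_of_bruhatLE_of_ne huv hne
  obtain ⟨i, hv⟩ := cs.exists_leftDescent_of_ne_one hv1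
  have hv : ℓ (s i * v) < ℓ v := hv
  rcases lt_or_gt_of_ne (cs.length_simple_mul_ne u i) with hu | hu
  · have hsu : ℓ (s i * u) < ℓ (s i * (s i * u)) := by rwa [cs.simple_mul_simple_cancel_left]
    have h_su_v : ∑ w ∈ (hfin (s i * u) v).toFinset, (-1 : ℤ) ^ ℓ w = 0 :=
      cs.sum_neg_one_pow_length_eq_zero_of_simple_mul_mem i fun w hw => by
        rw [mem_bruhatIcc] at hw ⊢
        exact cs.bruhatLE_simple_mul_of_bruhatLE hsu hv hw.1 hw.2
    have h_su_sv := ih _ hv (u := s i * u) (v := s i * v)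
      (by simpa [minSimpleMul_of_length_lt hu, minSimpleMul_of_length_lt hv] using
        cs.minSimpleMul_bruhatLE_minSimpleMul i huv)
      (fun h => hne (mul_left_cancel h)) rfl
    have h_u_sv : ∑ w ∈ (hfin u (s i * v)).toFinset, (-1 : ℤ) ^ ℓ w = 0 := by
      by_cases h : BruhatLE cs u (s i * v)
      · refine ih _ hv h ?_ rfl
        rintro rfl
        rw [cs.simple_mul_simple_cancel_left] at hu
        omega
      · refine Finset.sum_eq_zero fun w hw => absurd ?_ h
        rw [mem_bruhatIcc] at hw
        exact hw.1.trans hw.2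
    have := cs.sum_bruhatIcc_add_sum_bruhatIcc hfin (fun w => (-1 : ℤ) ^ ℓ w) hu hv
    rw [h_su_v, h_u_sv, h_su_sv] at this
    simpa using this.symm
  · exact cs.sum_neg_one_pow_length_eq_zero_of_simple_mul_mem i fun w hw => by
      rw [mem_bruhatIcc] at hw ⊢
      exact cs.bruhatLE_simple_mul_of_bruhatLE hu hv hw.1 hw.2

theorem eq_of_sum_bruhatIcc_eq {A : Type*} [AddCancelCommMonoid A] (f g : W → A) {u : W}
    (hu : f u = g u) (hsum : ∀ v, BruhatLE cs u v → u ≠ v →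
      ∑ w ∈ (hfin u v).toFinset, f w = ∑ w ∈ (hfin u v).toFinset, g w)
    {v : W} (huv : BruhatLE cs u v) : f v = g v := by
  classical
  induction hn : ℓ v using Nat.strong_induction_on generalizing v with
  | _ n ih =>
  subst hn
  obtain rfl | hne := eq_or_ne u v
  · exact hu
  have hv : v ∈ (hfin u v).toFinset := (cs.mem_bruhatIcc hfin).mpr ⟨huv, .refl⟩
  have hlower : ∀ w ∈ (hfin u v).toFinset.erase v, f w = g w := by
    intro w hw
    obtain ⟨hwv, hw⟩ := Finset.mem_erase.mp hw
    rw [mem_bruhatIcc] at hw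
    exact ih _ (cs.length_lt_of_bruhatLE_of_ne hw.2 hwv) hw.1 rfl
  have := hsum v huv hne
  rw [← Finset.add_sum_erase _ _ hv, ← Finset.add_sum_erase _ _ hv,
    Finset.sum_congr rfl hlower] at this
  exact add_right_cancel this

end AlternatingSum

end CoxeterSystem

/-- The Möbius function of the Bruhat order is `μ(u,v) = (-1)^{ℓ(v)-ℓ(u)}`. -/
theorem bruhat_moebius (cs : CoxeterSystem M W)
    (hfin : ∀ u v : W, {w | BruhatLE cs u w ∧ BruhatLE cs w v}.Finite)
    (mu : W → W → ℤ)
    (hmu1 : ∀ u, mu u u = 1)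
    (hmu2 : ∀ u v, BruhatLE cs u v → u ≠ v → ∑ w ∈ (hfin u v).toFinset, mu u w = 0)
    (u v : W) (huv : BruhatLE cs u v) :
    mu u v = (-1 : ℤ) ^ (cs.length v - cs.length u) := by
  refine cs.eq_of_sum_bruhatIcc_eq hfin (mu u) (fun w => (-1 : ℤ) ^ (cs.length w - cs.length u))
    (by simp [hmu1]) (fun v huv hne => ?_) huv
  rw [hmu2 u v huv hne, eq_comm]
  calc ∑ w ∈ (hfin u v).toFinset, (-1 : ℤ) ^ (cs.length w - cs.length u)
      = ∑ w ∈ (hfin u v).toFinset, (-1 : ℤ) ^ cs.length u * (-1) ^ cs.length w := by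
        refine Finset.sum_congr rfl fun w hw => neg_one_pow_sub_of_le ?_
        exact cs.length_le_of_bruhatLE ((cs.mem_bruhatIcc hfin).mp hw).1
    _ = 0 := by rw [← Finset.mul_sum, cs.sum_neg_one_pow_length_eq_zero hfin huv hne, mul_zero]
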